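/- arXiv:2007.15929 — 4 statements merged into one kernel-verified Lean document; each statement's English description precedes it below -/
import Mathlib

section
/- If U is normally distributed with mean 0 and variance σ² (σ > 0) and α > 0, then E[φ_{α,2}(U/σ)] = 0, where φ_{α,2}(u) = (u² - 1/(α+1))·exp(-αu²/2). -/
/-!
Multiplying the density of `N(0, σ²)` by `exp (-(α / 2) (u / σ)²)` gives `(α + 1)^(-1/2)` times the
density of `N(0, σ² / (α + 1))`. The expectation is therefore a multiple of
`E[U² / σ²] - 1 / (α + 1)` for `U ~ N(0, σ² / (α + 1))`, which vanishes.
-/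

open MeasureTheory ProbabilityTheory Real
open scoped NNReal

lemma integral_sq_gaussianReal_zero (v : ℝ≥0) : ∫ x, x ^ 2 ∂gaussianReal 0 v = v := by
  simpa [variance_eq_integral measurable_id'.aemeasurable] using
    variance_fun_id_gaussianReal (μ := 0) (v := v)

lemma gaussianPDFReal_zero_mul_exp {v w : ℝ≥0} (hv : v ≠ 0) (hw : w ≠ 0) (x : ℝ) :
    gaussianPDFReal 0 v x * rexp (-(((w : ℝ)⁻¹ - (v : ℝ)⁻¹) / 2) * x ^ 2)
      = √((w : ℝ) / v) * gaussianPDFReal 0 w x := by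
  have hv' : (0 : ℝ) < v := by positivity
  have hw' : (0 : ℝ) < w := by positivity
  have hexp : -x ^ 2 / (2 * v) + -(((w : ℝ)⁻¹ - (v : ℝ)⁻¹) / 2) * x ^ 2 = -x ^ 2 / (2 * w) := by
    field_simp
    ring
  have hnorm : (√(2 * π * v))⁻¹ = √((w : ℝ) / v) * (√(2 * π * w))⁻¹ := by
    rw [sqrt_div' _ hv'.le, sqrt_mul' _ hv'.le, sqrt_mul' _ hw'.le]
    field_simp
  simp only [gaussianPDFReal, sub_zero]
  rw [mul_assoc, ← exp_add, hexp, hnorm, mul_assoc]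

lemma integral_mul_exp_gaussianReal_zero {v w : ℝ≥0} (hv : v ≠ 0) (hw : w ≠ 0) (f : ℝ → ℝ) :
    ∫ x, f x * rexp (-(((w : ℝ)⁻¹ - (v : ℝ)⁻¹) / 2) * x ^ 2) ∂gaussianReal 0 v
      = √((w : ℝ) / v) * ∫ x, f x ∂gaussianReal 0 w := by
  simp only [integral_gaussianReal_eq_integral_smul hv, integral_gaussianReal_eq_integral_smul hw,
    smul_eq_mul, ← integral_const_mul]
  congr 1 with x
  rw [mul_left_comm, gaussianPDFReal_zero_mul_exp hv hw]
  ring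

theorem phi2_fisher_consistency (α σ : ℝ) (hα : 0 < α) (hσ : 0 < σ) :
    (∫ u, ((u / σ) ^ 2 - 1 / (α + 1)) * Real.exp (-(α / 2) * (u / σ) ^ 2)
        ∂(gaussianReal 0 (Real.toNNReal (σ ^ 2)))) = 0 := by
  set v := (σ ^ 2).toNNReal
  set w := (σ ^ 2 / (α + 1)).toNNReal
  have hv : (v : ℝ) = σ ^ 2 := Real.coe_toNNReal _ (by positivity)
  have hw : (w : ℝ) = σ ^ 2 / (α + 1) := Real.coe_toNNReal _ (by positivity)
  have hv0 : v ≠ 0 := by rw [← NNReal.coe_ne_zero, hv]; positivity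
  have hw0 : w ≠ 0 := by rw [← NNReal.coe_ne_zero, hw]; positivity
  have htilt (u : ℝ) : -(α / 2) * (u / σ) ^ 2 = -(((w : ℝ)⁻¹ - (v : ℝ)⁻¹) / 2) * u ^ 2 := by
    rw [hv, hw]
    field_simp
    ring
  have hsq_integrable : Integrable (fun u : ℝ => u ^ 2) (gaussianReal 0 w) :=
    (memLp_id_gaussianReal 2).integrable_sq
  simp_rw [htilt, integral_mul_exp_gaussianReal_zero hv0 hw0, div_pow]
  rw [integral_sub (hsq_integrable.div_const _) (integrable_const _), integral_div,
    integral_sq_gaussianReal_zero, integral_const, probReal_univ, one_smul, hw]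
  exact mul_eq_zero_of_right _ (by field_simp; ring)
end

section
/- For U ~ N(0,1) and α > 0, E[(αU⁴ - ((5α+3)/(α+1))U² + (2α+1)/(α+1)²)·exp(-αU²/2)] = -2/(α+1)^{5/2}. -/
/-!
Against the standard normal density, the weight `exp (-α u² / 2)` leaves the Gaussian kernel
`exp (-b u²)` with `b = (α + 1) / 2`. Its even moments `∫ x ^ (2k) exp (-b x²) = Γ(k + 1/2) / b ^ (k + 1/2)`
come from the Gamma integral, and with `Γ(1/2), Γ(3/2), Γ(5/2) = √π, √π/2, 3√π/4` the three
terms of the integrand combine to `-2 / (α + 1) ^ (5/2)`.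
-/

open MeasureTheory ProbabilityTheory Real Set

theorem integrable_pow_mul_exp_neg_mul_sq {b : ℝ} (hb : 0 < b) (n : ℕ) :
    Integrable fun x : ℝ => x ^ n * exp (-b * x ^ 2) := by
  simpa only [rpow_natCast] using
    integrable_rpow_mul_exp_neg_mul_sq hb (neg_one_lt_zero.trans_le (Nat.cast_nonneg n))

theorem integral_even_pow_mul_exp_neg_mul_sq {b : ℝ} (hb : 0 < b) (k : ℕ) :
    ∫ x : ℝ, x ^ (2 * k) * exp (-b * x ^ 2) = Gamma (k + 1 / 2) / (b ^ k * √b) := by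
  set f : ℝ → ℝ := fun x => x ^ (2 * k) * exp (-b * x ^ 2)
  have hf_even : f = fun x => f |x| := by
    ext x; simp only [f, pow_mul, sq_abs]
  have hf_Ioi : ∫ x in Ioi 0, f x
      = ∫ x in Ioi 0, x ^ ((2 * k : ℕ) : ℝ) * exp (-b * x ^ (2 : ℝ)) := by
    simp only [f, rpow_natCast, rpow_two]
  have hexp : -(((2 * k : ℕ) : ℝ) + 1) / 2 = -((k : ℝ) + 1 / 2) := by push_cast; ring
  have harg : (((2 * k : ℕ) : ℝ) + 1) / 2 = (k : ℝ) + 1 / 2 := by push_cast; ring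
  rw [hf_even, integral_comp_abs, hf_Ioi,
    integral_rpow_mul_exp_neg_mul_rpow two_pos (neg_one_lt_zero.trans_le (Nat.cast_nonneg _)) hb,
    hexp, harg, rpow_neg hb.le, rpow_add hb, rpow_natCast, sqrt_eq_rpow]
  field_simp

theorem integral_mul_exp_neg_mul_sq_div_two_gaussianReal (g : ℝ → ℝ) (c : ℝ) :
    ∫ u, g u * exp (-(c * u ^ 2) / 2) ∂gaussianReal 0 1
      = (√(2 * π))⁻¹ * ∫ u, g u * exp (-((c + 1) / 2) * u ^ 2) := by
  rw [integral_gaussianReal_eq_integral_smul one_ne_zero, ← integral_const_mul]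
  congr 1 with u
  simp only [gaussianPDFReal, smul_eq_mul, NNReal.coe_one, mul_one, sub_zero]
  rw [show -((c + 1) / 2) * u ^ 2 = -u ^ 2 / 2 + -(c * u ^ 2) / 2 by ring, exp_add]
  ring

theorem J22_expectation (α : ℝ) (hα : 0 < α) :
    (∫ u, (α * u ^ 4 - ((5 * α + 3) / (α + 1)) * u ^ 2 + (2 * α + 1) / (α + 1) ^ 2) *
        Real.exp (-(α * u ^ 2) / 2) ∂(gaussianReal 0 1))
      = -2 / (α + 1) ^ ((5 : ℝ) / 2) := by
  set b := (α + 1) / 2 with hb_def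
  have hb : 0 < b := by positivity
  have hsplit :
      (fun u => (α * u ^ 4 - (5 * α + 3) / (α + 1) * u ^ 2 + (2 * α + 1) / (α + 1) ^ 2) *
        exp (-b * u ^ 2))
      = fun u => α * (u ^ (2 * 2) * exp (-b * u ^ 2))
        - (5 * α + 3) / (α + 1) * (u ^ (2 * 1) * exp (-b * u ^ 2))
        + (2 * α + 1) / (α + 1) ^ 2 * (u ^ (2 * 0) * exp (-b * u ^ 2)) := by
    ext u; ring
  have hint (k : ℕ) := integrable_pow_mul_exp_neg_mul_sq hb (2 * k)
  rw [integral_mul_exp_neg_mul_sq_div_two_gaussianReal, hsplit,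
    integral_add (by exact ((hint 2).const_mul _).sub ((hint 1).const_mul _))
      ((hint 0).const_mul _),
    integral_sub ((hint 2).const_mul _) ((hint 1).const_mul _),
    integral_const_mul, integral_const_mul, integral_const_mul]
  simp only [integral_even_pow_mul_exp_neg_mul_sq hb, Gamma_nat_add_half]
  have hsqrt_b : √b = √(α + 1) / √2 := by rw [hb_def, sqrt_div (by positivity)]
  have hrpow : (α + 1) ^ (5 / 2 : ℝ) = (α + 1) ^ 2 * √(α + 1) := by
    rw [sqrt_eq_rpow, ← rpow_natCast, ← rpow_add (by positivity)]; norm_num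
  rw [hsqrt_b, hrpow, sqrt_mul zero_le_two, hb_def]
  norm_num [Nat.doubleFactorial]
  field_simp
  ring
end

section
/- Let α > 0, let n ≥ 1, let u₁,…,uₙ, y₁,…,yₙ be reals and x₁,…,xₙ vectors. As α → 0⁺, the RP loss L_n^α(β,σ) = (1/n)·Σᵢ (-σ^{-α/(α+1)}·exp(-(α/2)((yᵢ - xᵢᵀβ)/σ)²)) satisfies: (L_n^α(β,σ) + 1)/α converges to log(σ) + (1/n)·Σᵢ (1/2)((yᵢ - xᵢᵀβ)/σ)² as α → 0⁺, i.e., minimizing L_n^α recovers (up to the constant log√(2π)) the negative log-likelihood in the limit. -/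
/-! The numerator `L_n^α + 1` vanishes at `α = 0`, so the limit is its derivative at `0`.
Each summand is `-exp (-(α / (α + 1)) log σ - (α / 2) rᵢ²)`, whose derivative at `0` is
`log σ + rᵢ² / 2`; averaging over `i` gives the limit. -/

open Real Filter Topology

theorem HasDerivAt.tendsto_div_nhdsGT_zero {f : ℝ → ℝ} {f' : ℝ} (hf : HasDerivAt f f' 0)
    (hf0 : f 0 = 0) : Tendsto (fun t => f t / t) (𝓝[>] 0) (𝓝 f') := by
  simpa [hf0, div_eq_inv_mul] using hf.tendsto_slope_zero_right

theorem hasDerivAt_rpow_neg_div_add_one_zero {σ : ℝ} (hσ : 0 < σ) :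
    HasDerivAt (fun α : ℝ => σ ^ (-(α / (α + 1)))) (-log σ) 0 := by
  have hquot : HasDerivAt (fun α : ℝ => α / (α + 1)) 1 0 := by
    simpa using (hasDerivAt_id' (x := (0 : ℝ))).fun_div ((hasDerivAt_id' (x := 0)).add_const 1)
      (by norm_num)
  simpa using hquot.neg.const_rpow hσ

theorem hasDerivAt_rpLoss_summand_zero {σ : ℝ} (hσ : 0 < σ) (c : ℝ) :
    HasDerivAt (fun α : ℝ => -(σ ^ (-(α / (α + 1))) * exp (-(α / 2) * c)))
      (log σ + c / 2) 0 := by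
  have hlin : HasDerivAt (fun α : ℝ => -(α / 2) * c) (-(c / 2)) 0 := by
    simpa [div_eq_inv_mul, mul_comm] using
      ((hasDerivAt_id' (x := (0 : ℝ))).div_const 2).fun_neg.mul_const c
  refine ((hasDerivAt_rpow_neg_div_add_one_zero hσ).fun_mul hlin.exp).fun_neg.congr_deriv ?_
  simp [add_comm]

theorem rp_loss_limit (n p : ℕ) (hn : 1 ≤ n) (y : Fin n → ℝ) (x : Fin n → Fin p → ℝ)
    (β : Fin p → ℝ) (σ : ℝ) (hσ : 0 < σ) :
    Filter.Tendsto
      (fun α : ℝ =>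
        ((1 / (n : ℝ)) * ∑ i, -(σ ^ (-(α / (α + 1))) *
            Real.exp (-(α / 2) * ((y i - ∑ j, x i j * β j) / σ) ^ 2)) + 1) / α)
      (nhdsWithin 0 (Set.Ioi 0))
      (nhds (Real.log σ +
        (1 / (n : ℝ)) * ∑ i, (1 / 2) * ((y i - ∑ j, x i j * β j) / σ) ^ 2)) := by
  have hn0 : (n : ℝ) ≠ 0 := Nat.cast_ne_zero.mpr (by omega)
  refine HasDerivAt.tendsto_div_nhdsGT_zero ?_ ?_
  · refine ((HasDerivAt.fun_sum fun i _ => hasDerivAt_rpLoss_summand_zero hσ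
      (((y i - ∑ j, x i j * β j) / σ) ^ 2)).const_mul (1 / (n : ℝ))).add_const 1 |>.congr_deriv ?_
    rw [Finset.sum_add_distrib, Finset.sum_const, Finset.card_univ, Fintype.card_fin,
      nsmul_eq_mul, mul_add, ← mul_assoc, one_div_mul_cancel hn0, one_mul]
    simp only [one_div, inv_mul_eq_div]
  · simp [hn0]
end

section
/- For the MCP penalty with a > 1 and λ > 0, and any z ∈ ℝ, the function β ↦ (1/2)(z - β)² + p_λ(|β|) — where p_λ(t) = λt - t²/(2a) for 0 ≤ t ≤ aλ and p_λ(t) = aλ²/2 for t > aλ — attains its minimum at β̂ = S(z,λ)/(1 - 1/a) if |z| ≤ aλ and at β̂ = z if |z| > aλ, where S is the soft-thresholding operator. -/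
/-!
Write `c = 1 - 1/a > 0`. Since `λt - t²/(2a)` differs from the MCP penalty by `(t - aλ)²/(2a)` beyond
`aλ`, it is a lower bound for the penalty everywhere, so the objective is bounded below by the convex
function `z²/2 + (c/2)β² - zβ + λ|β|`, whose minimizer is the rescaled soft-thresholding estimate
`S(z,λ)/c`. When `|z| ≤ aλ` that point lies in `[-aλ, aλ]`, where the two functions agree. When
`|z| > aλ`, the objective at `β = z` is the maximal penalty `aλ²/2`, and any `β` with `|β| ≤ aλ`
pays at least as much because `aλ - |β| < |z - β|`.
-/

noncomputable def softThresh (z lam : ℝ) : ℝ :=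
  if lam < z then z - lam else if z < -lam then z + lam else 0

noncomputable def mcpPen (a lam t : ℝ) : ℝ :=
  if t ≤ a * lam then lam * t - t ^ 2 / (2 * a) else a * lam ^ 2 / 2

noncomputable def mcpObj (a lam z β : ℝ) : ℝ :=
  1 / 2 * (z - β) ^ 2 + mcpPen a lam |β|

section SoftThresh

variable {z lam : ℝ}

theorem abs_softThresh (hlam : 0 ≤ lam) : |softThresh z lam| = max (|z| - lam) 0 := by
  unfold softThresh
  split_ifs with h₁ h₂
  · rw [abs_of_pos (sub_pos.mpr h₁), abs_of_pos (hlam.trans_lt h₁), max_eq_left (by linarith)]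
  · rw [abs_of_neg (by linarith), abs_of_neg (by linarith), max_eq_left (by linarith)]; ring
  · have : |z| ≤ lam := abs_le.mpr ⟨by linarith, by linarith⟩
    rw [abs_zero, max_eq_right (by linarith)]

theorem abs_sub_softThresh_le (hlam : 0 ≤ lam) : |z - softThresh z lam| ≤ lam := by
  unfold softThresh
  split_ifs with h₁ h₂ <;> rw [abs_le] <;> constructor <;> linarith

theorem sub_softThresh_mul_softThresh :
    (z - softThresh z lam) * softThresh z lam = lam * |softThresh z lam| := by
  unfold softThresh
  split_ifs with h₁ h₂
  · rw [abs_of_pos (sub_pos.mpr h₁)]; ring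
  · rw [abs_of_neg (by linarith)]; ring
  · simp

theorem lasso_softThresh_div_le (c : ℝ) (hc : 0 < c) (hlam : 0 ≤ lam) (β : ℝ) :
    c / 2 * (softThresh z lam / c) ^ 2 - z * (softThresh z lam / c) + lam * |softThresh z lam / c|
      ≤ c / 2 * β ^ 2 - z * β + lam * |β| := by
  set s := softThresh z lam
  -- `z - s` is a subgradient of `lam * |·|` at `s`: these two facts are the optimality condition.
  have h_sub : (z - s) * β ≤ lam * |β| :=
    (le_abs_self _).trans <| by
      rw [abs_mul]; exact mul_le_mul_of_nonneg_right (abs_sub_softThresh_le hlam) (abs_nonneg β)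
  have h_eq : (z - s) * s = lam * |s| := sub_softThresh_mul_softThresh
  have h_sq : 0 ≤ c / 2 * (β - s / c) ^ 2 := by positivity
  rw [abs_div, abs_of_pos hc]
  have key : (c / 2 * β ^ 2 - z * β + lam * |β|) - (c / 2 * (s / c) ^ 2 - z * (s / c) + lam * (|s| / c))
      = c / 2 * (β - s / c) ^ 2 + (lam * |β| - (z - s) * β) + ((z - s) * s - lam * |s|) / c := by
    field_simp; ring
  rw [h_eq, sub_self, zero_div] at key
  linarith

end SoftThresh

section MCP

variable {a lam t : ℝ}

theorem mcpPen_of_le (h : t ≤ a * lam) : mcpPen a lam t = lam * t - t ^ 2 / (2 * a) := if_pos h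

theorem mcpPen_of_lt (h : a * lam < t) : mcpPen a lam t = a * lam ^ 2 / 2 := if_neg h.not_ge

theorem le_mcpPen (ha : 0 < a) : lam * t - t ^ 2 / (2 * a) ≤ mcpPen a lam t := by
  rcases le_or_gt t (a * lam) with h | h
  · rw [mcpPen_of_le h]
  · rw [mcpPen_of_lt h]
    have key : a * lam ^ 2 / 2 - (lam * t - t ^ 2 / (2 * a)) = (t - a * lam) ^ 2 / (2 * a) := by
      field_simp; ring
    have : 0 ≤ (t - a * lam) ^ 2 / (2 * a) := by positivity
    linarith

theorem one_sub_one_div_pos (ha : 1 < a) : 0 < 1 - 1 / a := by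
  have := (div_lt_one (zero_lt_one.trans ha)).mpr ha
  linarith

theorem mcp_quadratic_eq_lasso (ha : a ≠ 0) (z β : ℝ) :
    1 / 2 * (z - β) ^ 2 + (lam * |β| - |β| ^ 2 / (2 * a))
      = z ^ 2 / 2 + ((1 - 1 / a) / 2 * β ^ 2 - z * β + lam * |β|) := by
  rw [sq_abs]; field_simp; ring

theorem abs_softThresh_div_le {z : ℝ} (ha : 1 < a) (hlam : 0 ≤ lam) (hz : |z| ≤ a * lam) :
    |softThresh z lam / (1 - 1 / a)| ≤ a * lam := by
  have hc := one_sub_one_div_pos ha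
  have h_scale : a * lam * (1 - 1 / a) = a * lam - lam := by
    field_simp [(zero_lt_one.trans ha).ne']
  rw [abs_div, abs_of_pos hc, div_le_iff₀ hc, abs_softThresh hlam, h_scale]
  have := mul_nonneg (sub_nonneg.mpr ha.le) hlam
  exact max_le (by linarith) (by linarith)

theorem mcpObj_softThresh_div_le {z : ℝ} (ha : 1 < a) (hlam : 0 ≤ lam) (hz : |z| ≤ a * lam)
    (β : ℝ) : mcpObj a lam z (softThresh z lam / (1 - 1 / a)) ≤ mcpObj a lam z β := by
  have ha₀ : 0 < a := zero_lt_one.trans ha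
  have h_lasso := lasso_softThresh_div_le (z := z) _ (one_sub_one_div_pos ha) hlam β
  have h_pen := le_mcpPen (lam := lam) (t := |β|) ha₀
  unfold mcpObj
  rw [mcpPen_of_le (abs_softThresh_div_le ha hlam hz), mcp_quadratic_eq_lasso ha₀.ne']
  have h_quad := mcp_quadratic_eq_lasso (lam := lam) ha₀.ne' z β
  linarith

theorem mcpObj_self_le {z : ℝ} (ha : 1 ≤ a) (hz : a * lam < |z|) (β : ℝ) :
    mcpObj a lam z z ≤ mcpObj a lam z β := by
  have ha₀ : 0 < a := zero_lt_one.trans_le ha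
  unfold mcpObj
  rw [sub_self, mcpPen_of_lt hz]
  rcases le_or_gt |β| (a * lam) with hβ | hβ
  · rw [mcpPen_of_le hβ]
    have h_gap : a * lam - |β| ≤ |z - β| := by linarith [abs_sub_abs_le_abs_sub z β]
    have h_sq : (a * lam - |β|) ^ 2 ≤ (z - β) ^ 2 := by
      rw [← sq_abs (z - β)]; exact pow_le_pow_left₀ (by linarith) h_gap 2
    have h_div : (a * lam - |β|) ^ 2 / a ≤ (a * lam - |β|) ^ 2 :=
      div_le_self (sq_nonneg _) ha
    have key : lam * |β| - |β| ^ 2 / (2 * a) = a * lam ^ 2 / 2 - (a * lam - |β|) ^ 2 / a / 2 := by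
      field_simp; ring
    rw [key]
    linarith
  · rw [mcpPen_of_lt hβ]
    linarith [sq_nonneg (z - β)]

end MCP

theorem mcp_univariate_minimizer (a lam z : ℝ) (ha : 1 < a) (hlam : 0 < lam) :
    ∀ β : ℝ,
      (1 / 2) * (z - (if |z| ≤ a * lam then softThresh z lam / (1 - 1 / a) else z)) ^ 2 +
          mcpPen a lam |if |z| ≤ a * lam then softThresh z lam / (1 - 1 / a) else z| ≤
        (1 / 2) * (z - β) ^ 2 + mcpPen a lam |β| := by
  intro β
  split_ifs with hz
  · exact mcpObj_softThresh_div_le ha hlam.le hz β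
  · exact mcpObj_self_le ha.le (not_le.mp hz) β
end
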